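/- Let H ∈ ℝ^{N×N} have all eigenvalues with positive real part, let δ = min_i Re(λ_i(H)) > 0, let S ∈ ℝ^{q×q} and C₀ ∈ ℝ^{p₀×q} with (C₀, S) detectable, and let P be the positive definite solution of P Sᵀ + S P − P C₀ᵀ C₀ P + I_q = 0. Then for any μ ≥ δ^{-1}, the matrix (I_N ⊗ S) − μ (H ⊗ P C₀ᵀ C₀) is Hurwitz. -/

import Mathlib

open Matrix Kronecker

def IsHurwitzK {N q : ℕ} (M : Matrix (Fin N × Fin q) (Fin N × Fin q) ℝ) : Prop :=
  ∀ z ∈ spectrum ℂ (M.map Complex.ofReal), z.re < 0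

/-- Detectability of `(C₀, S)` via the Hautus test. -/
def Detectable {q p₀ : ℕ} (C₀ : Matrix (Fin p₀) (Fin q) ℝ) (S : Matrix (Fin q) (Fin q) ℝ) :
    Prop :=
  ∀ lam : ℂ, 0 ≤ lam.re →
    (Matrix.fromRows (lam • (1 : Matrix (Fin q) (Fin q) ℂ) - S.map Complex.ofReal)
      (C₀.map Complex.ofReal)).rank = q

/-!
With `K = PC₀ᵀC₀`, both `1 ⊗ S` and `H ⊗ K` commute with `H ⊗ 1`, so an eigenvector of
`1 ⊗ S - μ H ⊗ K` for an eigenvalue `z` can be chosen to be an eigenvector of `H ⊗ 1` as well,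
for some eigenvalue `λ` of `H`. On it the matrix acts as `1 ⊗ (S - μλK)`, so `z` is an
eigenvalue of `A = S - cK` with `Re c = μ Re λ ≥ μδ ≥ 1`. The Riccati equation rewrites as the
Lyapunov identity `AP + PAᴴ = -(1 + (2 Re c - 1)(C₀P)ᴴ(C₀P))`, and pairing it with a left
eigenvector `w` of `A` gives `2 Re z · w*Pw < 0`.
-/

namespace Matrix

section Spectrum

variable {m n : Type*} [Fintype m] [Fintype n] [DecidableEq m] [DecidableEq n]

theorem mem_spectrum_iff_exists_mulVec_eq_smul {K : Type*} [Field K] {A : Matrix n n K} {z : K} :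
    z ∈ spectrum K A ↔ ∃ v ≠ 0, A *ᵥ v = z • v := by
  rw [← spectrum_toLin', ← Module.End.hasEigenvalue_iff_mem_spectrum]
  constructor
  · intro h
    obtain ⟨v, hv⟩ := h.exists_hasEigenvector
    exact ⟨v, hv.2, by simpa using hv.apply_eq_smul⟩
  · rintro ⟨v, hv, h⟩
    exact Module.End.hasEigenvalue_of_hasEigenvector ⟨by simpa [Module.End.mem_eigenspace_iff], hv⟩

theorem exists_mulVec_eq_smul_of_commute {K : Type*} [Field K] [IsAlgClosed K]
    {A B : Matrix n n K} (hAB : Commute A B) {z : K} (hz : z ∈ spectrum K A) :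
    ∃ v ≠ 0, ∃ l : K, A *ᵥ v = z • v ∧ B *ᵥ v = l • v := by
  rw [← spectrum_toLin', ← Module.End.hasEigenvalue_iff_mem_spectrum] at hz
  have hE : Set.MapsTo (toLin' B) (Module.End.eigenspace (toLin' A) z)
      (Module.End.eigenspace (toLin' A) z) :=
    Module.End.mapsTo_genEigenspace_of_comm (hAB.map toLinAlgEquiv') z 1
  have : Nontrivial (Module.End.eigenspace (toLin' A) z) := Submodule.nontrivial_iff_ne_bot.2 hz
  obtain ⟨l, hl⟩ := Module.End.exists_eigenvalue ((toLin' B).restrict hE)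
  obtain ⟨⟨v, hvA⟩, hvB⟩ := hl.exists_hasEigenvector
  refine ⟨v, fun h => hvB.2 (Subtype.ext h), l, ?_, congrArg Subtype.val hvB.apply_eq_smul⟩
  simpa [Module.End.mem_eigenspace_iff] using hvA

theorem spectrum_one_kronecker_subset {R : Type*} [CommRing R] (A : Matrix n n R) :
    spectrum R ((1 : Matrix m m R) ⊗ₖ A) ⊆ spectrum R A := by
  intro z hz hA
  refine hz ?_
  rw [spectrum.mem_resolventSet_iff, isUnit_iff_isUnit_det] at hA ⊢
  have : algebraMap R _ z - (1 : Matrix m m R) ⊗ₖ A =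
      (1 : Matrix m m R) ⊗ₖ (algebraMap R _ z - A) := by
    ext ⟨i, a⟩ ⟨j, b⟩
    by_cases i = j <;> simp [algebraMap_matrix_apply, *, mul_sub]
  rw [this, det_kronecker]
  simpa using hA.pow _

theorem spectrum_kronecker_one_subset {R : Type*} [CommRing R] (A : Matrix m m R) :
    spectrum R (A ⊗ₖ (1 : Matrix n n R)) ⊆ spectrum R A := by
  intro z hz hA
  refine hz ?_
  rw [spectrum.mem_resolventSet_iff, isUnit_iff_isUnit_det] at hA ⊢
  have : algebraMap R _ z - A ⊗ₖ (1 : Matrix n n R) =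
      (algebraMap R _ z - A) ⊗ₖ (1 : Matrix n n R) := by
    ext ⟨i, a⟩ ⟨j, b⟩
    by_cases a = b <;> simp [algebraMap_matrix_apply, *]
  rw [this, det_kronecker]
  simpa using hA.pow _

theorem exists_mem_spectrum_of_mem_spectrum_one_kronecker_add_kronecker {K : Type*} [Field K]
    [IsAlgClosed K] {H : Matrix m m K} {S L : Matrix n n K} {z : K}
    (hz : z ∈ spectrum K ((1 : Matrix m m K) ⊗ₖ S + H ⊗ₖ L)) :
    ∃ l ∈ spectrum K H, z ∈ spectrum K (S + l • L) := by
  have hHL : H ⊗ₖ L = ((1 : Matrix m m K) ⊗ₖ L) * (H ⊗ₖ (1 : Matrix n n K)) := by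
    rw [← mul_kronecker_mul, Matrix.one_mul, Matrix.mul_one]
  have hcomm : Commute ((1 : Matrix m m K) ⊗ₖ S + H ⊗ₖ L) (H ⊗ₖ (1 : Matrix n n K)) := by
    simp only [Commute, SemiconjBy, Matrix.add_mul, Matrix.mul_add, ← mul_kronecker_mul,
      Matrix.one_mul, Matrix.mul_one]
  obtain ⟨v, hv, l, hzv, hlv⟩ := exists_mulVec_eq_smul_of_commute hcomm hz
  refine ⟨l, spectrum_kronecker_one_subset H (mem_spectrum_iff_exists_mulVec_eq_smul.2
    ⟨v, hv, hlv⟩), spectrum_one_kronecker_subset _ (mem_spectrum_iff_exists_mulVec_eq_smul.2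
    ⟨v, hv, ?_⟩)⟩
  rw [kronecker_add, kronecker_smul, add_mulVec, smul_mulVec, ← hzv, add_mulVec, hHL,
    ← mulVec_mulVec, hlv, mulVec_smul]

open scoped ComplexOrder in
theorem re_lt_zero_of_mem_spectrum_of_lyapunov {A P Q : Matrix n n ℂ} (hP : P.PosSemidef)
    (hQ : Q.PosDef) (hAPQ : A * P + P * Aᴴ = -Q) {z : ℂ} (hz : z ∈ spectrum ℂ A) : z.re < 0 := by
  have hz' : star z ∈ spectrum ℂ Aᴴ := by
    rw [← star_eq_conjTranspose, spectrum.map_star, Set.star_mem_star]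
    exact hz
  obtain ⟨v, hv, hAv⟩ := mem_spectrum_iff_exists_mulVec_eq_smul.1 hz'
  have hvA : star v ᵥ* A = z • star v := by
    simpa [star_mulVec] using congrArg star hAv
  have hAP : star v ⬝ᵥ (A * P) *ᵥ v = z * (star v ⬝ᵥ P *ᵥ v) := by
    rw [← mulVec_mulVec, dotProduct_mulVec, hvA, smul_dotProduct, smul_eq_mul]
  have hPA : star v ⬝ᵥ (P * Aᴴ) *ᵥ v = star z * (star v ⬝ᵥ P *ᵥ v) := by
    rw [← mulVec_mulVec, hAv, mulVec_smul, dotProduct_smul, smul_eq_mul]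
  have key : (z + star z) * (star v ⬝ᵥ P *ᵥ v) = -(star v ⬝ᵥ Q *ᵥ v) := by
    rw [add_mul, ← hAP, ← hPA, ← dotProduct_add, ← add_mulVec, hAPQ, neg_mulVec, dotProduct_neg]
  have hre : 2 * z.re * (star v ⬝ᵥ P *ᵥ v).re = -(star v ⬝ᵥ Q *ᵥ v).re := by
    simpa [Complex.add_conj] using congrArg Complex.re key
  have hp := (Complex.nonneg_iff.1 (hP.dotProduct_mulVec_nonneg v)).1
  have hq := (Complex.pos_iff.1 (hQ.dotProduct_mulVec_pos hv)).1
  nlinarith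

open scoped ComplexOrder in
theorem re_lt_zero_of_mem_spectrum_of_riccati {p : Type*} [Fintype p]
    {S P : Matrix n n ℂ} {C : Matrix p n ℂ} (hP : P.PosSemidef)
    (hric : P * Sᴴ + S * P - P * Cᴴ * C * P + 1 = 0) {c : ℂ} (hc : 1 / 2 ≤ c.re) {z : ℂ}
    (hz : z ∈ spectrum ℂ (S - c • (P * Cᴴ * C))) : z.re < 0 := by
  have hSP : S * P + P * Sᴴ = P * (Cᴴ * (C * P)) - 1 := by
    rw [← sub_eq_zero, ← hric]
    simp only [Matrix.mul_assoc]
    abel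
  have hgain : 0 ≤ c + star c - 1 := by
    rw [RCLike.star_def, Complex.add_conj, ← Complex.ofReal_one, ← Complex.ofReal_sub,
      Complex.zero_le_real]
    linarith
  refine re_lt_zero_of_mem_spectrum_of_lyapunov hP
    (PosDef.one.add_posSemidef ((posSemidef_conjTranspose_mul_self (C * P)).smul hgain)) ?_ hz
  simp only [sub_mul, mul_sub, smul_mul, Matrix.mul_smul, conjTranspose_sub,
    conjTranspose_smul, conjTranspose_mul, conjTranspose_conjTranspose, hP.isHermitian.eq,
    Matrix.mul_assoc]
  linear_combination (norm := module) hSP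

end Spectrum

section OfReal

variable {m n p : Type*} [Fintype n]

theorem map_ofReal_mul (A : Matrix m n ℝ) (B : Matrix n p ℝ) :
    (A * B).map Complex.ofReal = A.map Complex.ofReal * B.map Complex.ofReal :=
  Matrix.map_mul (f := Complex.ofRealHom)

omit [Fintype n] in
theorem map_ofReal_transpose (A : Matrix m n ℝ) :
    Aᵀ.map Complex.ofReal = (A.map Complex.ofReal)ᴴ := by
  ext; simp

open scoped MatrixOrder ComplexOrder in
theorem PosSemidef.map_ofReal [DecidableEq n] {P : Matrix n n ℝ} (hP : P.PosSemidef) :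
    (P.map Complex.ofReal).PosSemidef := by
  have hP' : (CFC.sqrt P)ᵀ * CFC.sqrt P = P := by
    rw [← conjTranspose_eq_transpose_of_trivial, ← star_eq_conjTranspose,
      (CFC.sqrt_nonneg P).isSelfAdjoint.star_eq, CFC.sqrt_mul_sqrt_self P hP.nonneg]
  rw [← hP', map_ofReal_mul, map_ofReal_transpose]
  exact posSemidef_conjTranspose_mul_self _

end OfReal

end Matrix

theorem distributed_observer_static_hurwitz_general {N q p₀ : ℕ}
    (H : Matrix (Fin N) (Fin N) ℝ) (S : Matrix (Fin q) (Fin q) ℝ)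
    (C₀ : Matrix (Fin p₀) (Fin q) ℝ)
    (δ : ℝ) (hδpos : 0 < δ)
    (hδ_lb : ∀ z ∈ spectrum ℂ (H.map Complex.ofReal), δ ≤ z.re)
    (P : Matrix (Fin q) (Fin q) ℝ) (hP : P.PosDef)
    (hric : P * Sᵀ + S * P - P * C₀ᵀ * C₀ * P + 1 = 0)
    (μ : ℝ) (hμ : δ⁻¹ ≤ μ) :
    IsHurwitzK (((1 : Matrix (Fin N) (Fin N) ℝ) ⊗ₖ S) - μ • (H ⊗ₖ (P * C₀ᵀ * C₀))) := by
  intro z hz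
  have hM : ((1 : Matrix (Fin N) (Fin N) ℝ) ⊗ₖ S - μ • (H ⊗ₖ (P * C₀ᵀ * C₀))).map Complex.ofReal
      = (1 : Matrix (Fin N) (Fin N) ℂ) ⊗ₖ S.map Complex.ofReal
        + H.map Complex.ofReal ⊗ₖ (-(μ : ℂ) • (P * C₀ᵀ * C₀).map Complex.ofReal) := by
    ext ⟨i, a⟩ ⟨j, b⟩
    by_cases i = j <;> simp [one_apply, *] <;> ring
  rw [hM] at hz
  obtain ⟨l, hl, hzl⟩ := exists_mem_spectrum_of_mem_spectrum_one_kronecker_add_kronecker hz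
  have hc : 1 / 2 ≤ ((μ : ℂ) * l).re := by
    have : 1 ≤ μ * l.re :=
      calc (1 : ℝ) = δ⁻¹ * δ := (inv_mul_cancel₀ hδpos.ne').symm
        _ ≤ μ * l.re := mul_le_mul hμ (hδ_lb l hl) hδpos.le ((inv_pos.2 hδpos).le.trans hμ)
    rw [Complex.re_ofReal_mul]
    linarith
  rw [smul_smul, mul_neg, neg_smul, ← sub_eq_add_neg, mul_comm, map_ofReal_mul, map_ofReal_mul,
    map_ofReal_transpose] at hzl
  refine re_lt_zero_of_mem_spectrum_of_riccati hP.posSemidef.map_ofReal ?_ hc hzl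
  simpa [Matrix.map_add, Matrix.map_sub, Matrix.map_one, map_ofReal_mul, map_ofReal_transpose]
    using congrArg (Matrix.map · Complex.ofReal) hric

/-- Distributed observer stability for a static graph: with the Riccati gain
`L₀ = P C₀ᵀ` and coupling `μ ≥ δ⁻¹` where `δ = min_i Re λ_i(H) > 0`, the
matrix `(I_N ⊗ S) − μ (H ⊗ P C₀ᵀ C₀)` is Hurwitz. -/
theorem distributed_observer_static_hurwitz {N q p₀ : ℕ}
    (H : Matrix (Fin N) (Fin N) ℝ) (S : Matrix (Fin q) (Fin q) ℝ)
    (C₀ : Matrix (Fin p₀) (Fin q) ℝ)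
    (hH : ∀ z ∈ spectrum ℂ (H.map Complex.ofReal), 0 < z.re)
    (δ : ℝ) (hδpos : 0 < δ)
    (hδ_lb : ∀ z ∈ spectrum ℂ (H.map Complex.ofReal), δ ≤ z.re)
    (hδ_attained : ∃ z ∈ spectrum ℂ (H.map Complex.ofReal), z.re = δ)
    (hdet : Detectable C₀ S)
    (P : Matrix (Fin q) (Fin q) ℝ) (hPsymm : P.IsSymm) (hP : P.PosDef)
    (hric : P * Sᵀ + S * P - P * C₀ᵀ * C₀ * P + 1 = 0)
    (μ : ℝ) (hμ : δ⁻¹ ≤ μ) :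
    IsHurwitzK (((1 : Matrix (Fin N) (Fin N) ℝ) ⊗ₖ S) - μ • (H ⊗ₖ (P * C₀ᵀ * C₀))) :=
  distributed_observer_static_hurwitz_general H S C₀ δ hδpos hδ_lb P hP hric μ hμ
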